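/- Let X_1(k),...,X_{L_k}(k), for k = 1,...,m, be mutually independent random variables where each X_j(k) is uniformly distributed on {0,1,...,k}, and let S_L = Σ_{k=1}^m Σ_{j=1}^{L_k} X_j(k). Then for every integer a ≥ 0, P(S_L = a) = (Σ_{j_1+...+j_m = a} ∏_{i=1}^m C(L_i+j_{i+1}, j_i)) / (∏_{i=1}^m (i+1)^{L_i}), where the sum ranges over nonnegative integer vectors (j_1,...,j_m) with j_1+...+j_m = a and j_{m+1}=0. Moreover E(S_L) = (1/2) Σ_{i=1}^m i·L_i and Var(S_L) = (1/12) Σ_{i=1}^m i(i+2)·L_i. -/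

import Mathlib

open MeasureTheory ProbabilityTheory Filter Finset

noncomputable section

/-- The Gaussian (`q`-)binomial coefficient `[n choose k]_q`, as a polynomial in `q`
with natural number coefficients. -/

def qBinom : ℕ → ℕ → Polynomial ℕ
  | _, 0 => 1
  | 0, _ + 1 => 0
  | n + 1, k + 1 => qBinom n k + Polynomial.X ^ (k + 1) * qBinom n (k + 1)

/-- Evaluation of a polynomial with natural number coefficients at a real argument. -/

def evalR (p : Polynomial ℕ) (x : ℝ) : ℝ := (p.map (Nat.castRingHom ℝ)).eval x

/-- `nx m j i = j (i+1)`, with the convention `j (m+1) = 0`. -/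

def nx (m : ℕ) (j : ℕ → ℕ) (i : ℕ) : ℕ := if i + 1 ≤ m then j (i + 1) else 0

/-- `j` is `L`-compatible (paper-indexed by `1,…,m`). -/

def Compatible (m : ℕ) (L j : ℕ → ℕ) : Prop :=
  ∀ i ∈ Finset.Icc 1 m, j i ≤ L i + nx m j i

/-- The numerator polynomial `∏_{i=1}^m [L_i + j_{i+1} choose j_i]_q` of `F(L,j)(q)`. -/

def FPol (m : ℕ) (L j : ℕ → ℕ) : Polynomial ℕ :=
  ∏ i ∈ Finset.Icc 1 m, qBinom (L i + nx m j i) (j i)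

/-- The normalizing constant `∏_{i=1}^m C(L_i + j_{i+1}, j_i)`. -/

def FNorm (m : ℕ) (L j : ℕ → ℕ) : ℕ :=
  ∏ i ∈ Finset.Icc 1 m, (L i + nx m j i).choose (j i)

/-- `Q(L,j) = Σ_{i=1}^m j_i (j_i + Σ_{ℓ=1}^{i-1} L_ℓ)`. -/

def Qstat (m : ℕ) (L j : ℕ → ℕ) : ℕ :=
  ∑ i ∈ Finset.Icc 1 m, j i * (j i + ∑ l ∈ Finset.Icc 1 (i - 1), L l)

/-- Paper-indexed (indices `1,…,m`) extension of a `Fin m`-vector of naturals, by zero. -/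

def extN (m : ℕ) (j : Fin m → ℕ) : ℕ → ℕ := fun i =>
  if h : 1 ≤ i ∧ i ≤ m then j ⟨i - 1, by omega⟩ else 0

/-- Paper-indexed (indices `1,…,m`) extension of a `Fin m`-vector of reals, by zero. -/

def extR (m : ℕ) (a : Fin m → ℝ) : ℕ → ℝ := fun i =>
  if h : 1 ≤ i ∧ i ≤ m then a ⟨i - 1, by omega⟩ else 0

/-- The modified `q`-supernomial `T̃(L,a)(q)`. -/

def Tsuper (m : ℕ) (L : ℕ → ℕ) (a : ℕ) : Polynomial ℕ :=
  ∑ j ∈ Finset.Nat.antidiagonalTuple m a,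
    Polynomial.X ^ Qstat m L (extN m j) * FPol m L (extN m j)

/-- `T̃(L)(q) = Σ_{a=0}^{L_1+⋯+L_m} T̃(L,a)(q)`. -/

def TsuperTot (m : ℕ) (L : ℕ → ℕ) : Polynomial ℕ :=
  ∑ a ∈ Finset.range (∑ i ∈ Finset.Icc 1 m, L i + 1), Tsuper m L a

/-- `e(L,j) = E(Inv(L,j)) = (1/2) Σ_{i=1}^m (L_i + j_{i+1} - j_i) j_i`. -/

def eStat (m : ℕ) (L j : ℕ → ℕ) : ℝ :=
  (1 / 2) * ∑ i ∈ Finset.Icc 1 m, (((L i : ℝ) + (nx m j i : ℕ)) - (j i : ℕ)) * (j i : ℕ)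

/-- `v(a,b) = (1/12) Σ_{i=1}^m (a_i + b_{i+1} - b_i) b_i (a_i + b_{i+1})`. -/

def vab (m : ℕ) (a b : ℕ → ℝ) : ℝ :=
  (1 / 12) * ∑ i ∈ Finset.Icc 1 m, (a i + b (i + 1) - b i) * b i * (a i + b (i + 1))

/-- The weight of the unrestricted mixing distribution. -/

def mixW (m : ℕ) (L j : ℕ → ℕ) : ℝ :=
  (FNorm m L j : ℝ) / ∏ i ∈ Finset.Icc 1 m, ((i : ℝ) + 1) ^ L i

/-- Convergence in distribution (weak convergence of the laws). -/

def TendstoInDist {Ω : Type*} [MeasureSpace Ω] {E : Type*} [MeasurableSpace E]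
    [TopologicalSpace E] (X : ℕ → Ω → E) (μ : Measure E) : Prop :=
  ∀ f : BoundedContinuousFunction E ℝ,
    Filter.Tendsto (fun N => ∫ ω, f (X N ω)) Filter.atTop (nhds (∫ y, f y ∂μ))

/-- The standard Gaussian measure on `ι → ℝ`. -/

def stdGaussianPi (ι : Type*) [Fintype ι] : Measure (ι → ℝ) :=
  Measure.pi fun _ => gaussianReal 0 1

/-- The centered multivariate normal distribution `N(0,S)` on `ι → ℝ`, for a positive
semidefinite covariance matrix `S`. -/

def mvNormal {ι : Type*} [Fintype ι] [DecidableEq ι] (S : Matrix ι ι ℝ)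
    (hS : S.PosSemidef) : Measure (ι → ℝ) :=
  (stdGaussianPi ι).map fun x =>
    ((hS.1.eigenvectorUnitary : Matrix ι ι ℝ) *
        Matrix.diagonal ((RCLike.ofReal : ℝ → ℝ) ∘ (√·) ∘ hS.1.eigenvalues) *
        (star hS.1.eigenvectorUnitary : Matrix ι ι ℝ)).mulVec x

/-- The covariance of two real random variables (with respect to `volume`);
the variance of `X` is `covar X X`. -/

def covar {Ω : Type*} [MeasureSpace Ω] (X Y : Ω → ℝ) : ℝ :=
  ∫ ω, (X ω - ∫ ω', X ω') * (Y ω - ∫ ω', Y ω')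

/-- The quadratic function `q(x,v) = xᵀMx + v·xᵀ`. -/

def qform {m : ℕ} (M : Matrix (Fin m) (Fin m) ℝ) (v x : Fin m → ℝ) : ℝ :=
  dotProduct x (M.mulVec x) + dotProduct v x

/-- The quadratic form `c S cᵀ` of a `Fin m`-indexed matrix at a paper-indexed vector `c`. -/

def quadForm {m : ℕ} (S : Matrix (Fin m) (Fin m) ℝ) (c : ℕ → ℝ) : ℝ :=
  ∑ i : Fin m, ∑ j : Fin m, c ((i : ℕ) + 1) * S i j * c ((j : ℕ) + 1)

/-- `c_i = a_i + b_{i+1} + b_{i-1} - 2 b_i` (paper-indexed). -/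

def cP (a b : ℕ → ℝ) (i : ℕ) : ℝ := a i + b (i + 1) + b (i - 1) - 2 * b i

/-- `f_i = a_i + b_{i+1} + b_{i-1} + 2 b_i + 2 Σ_{ℓ=1}^{i-1} a_ℓ` (paper-indexed). -/

def fP (a b : ℕ → ℝ) (i : ℕ) : ℝ :=
  a i + b (i + 1) + b (i - 1) + 2 * b i + 2 * ∑ l ∈ Finset.Icc 1 (i - 1), a l

/-- `b_i = i Σ_{ℓ=i}^m a_ℓ/(ℓ+1)` (paper-indexed). -/

def bPaper (m : ℕ) (a : Fin m → ℝ) (i : ℕ) : ℝ :=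
  (i : ℝ) * ∑ l ∈ Finset.Icc i m, extR m a l / ((l : ℝ) + 1)

/-- The asymptotic covariance matrix of the mixing distribution in the unrestricted case:
`Σ_{i,j} = min(i,j) Σ_{k=max(i,j)}^m a_k/(k+1) - ij Σ_{k=max(i,j)}^m a_k/(k+1)²`. -/

def SigUnr (m : ℕ) (a : Fin m → ℝ) : Matrix (Fin m) (Fin m) ℝ := fun i j =>
  ((min ((i : ℕ) + 1) ((j : ℕ) + 1) : ℕ) : ℝ) *
      (∑ k ∈ Finset.Icc (max ((i : ℕ) + 1) ((j : ℕ) + 1)) m, extR m a k / ((k : ℝ) + 1)) -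
    (((i : ℕ) + 1 : ℝ) * ((j : ℕ) + 1 : ℝ)) *
      ∑ k ∈ Finset.Icc (max ((i : ℕ) + 1) ((j : ℕ) + 1)) m, extR m a k / ((k : ℝ) + 1) ^ 2

/-- `σ²(a) = (1/12) Σ_{k=1}^m k(k+2) a_k`. -/

def sigSq (m : ℕ) (a : Fin m → ℝ) : ℝ :=
  (1 / 12) * ∑ k ∈ Finset.Icc 1 m, (k : ℝ) * ((k : ℝ) + 2) * extR m a k

/-- `c(i) = Σ_{k=i}^m ((k+1-i)/(k+1)) a_k` (paper-indexed). -/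

def cRes (m : ℕ) (a : Fin m → ℝ) (i : ℕ) : ℝ :=
  ∑ k ∈ Finset.Icc i m, (((k : ℝ) + 1 - (i : ℝ)) / ((k : ℝ) + 1)) * extR m a k

/-- The asymptotic covariance matrix of the mixing distribution in the central
restricted case. -/

def SigRes (m : ℕ) (a : Fin m → ℝ) : Matrix (Fin m) (Fin m) ℝ := fun i j =>
  SigUnr m a i j -
    ((((i : ℕ) + 1 : ℝ) * ((j : ℕ) + 1 : ℝ)) / (2 * sigSq m a)) *
      cRes m a ((i : ℕ) + 1) * cRes m a ((j : ℕ) + 1)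

/-- `X` has probability generating function `p(q)/p(1)`. -/

def pgfLaw {Ω : Type*} [MeasureSpace Ω] (X : Ω → ℕ) (p : Polynomial ℕ) : Prop :=
  ∀ k : ℕ, volume {ω | X ω = k} = ENNReal.ofReal ((p.coeff k : ℝ) / ((p.eval 1 : ℕ) : ℝ))

/-- `J` has the mixing distribution `P(J=j) = ∏ C(L_i+j_{i+1}, j_i) / ∏ (i+1)^{L_i}`. -/

def mixLaw {Ω : Type*} [MeasureSpace Ω] (m : ℕ) (L : ℕ → ℕ) (J : Ω → Fin m → ℕ) : Prop :=
  ∀ j : Fin m → ℕ, volume {ω | J ω = j} = ENNReal.ofReal (mixW m L (extN m j))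

/-- Conditionally on `J = j`, the random variable `Y` is distributed as `Inv(L,j)`. -/

def condInvLaw {Ω : Type*} [MeasureSpace Ω] (m : ℕ) (L : ℕ → ℕ)
    (J : Ω → Fin m → ℕ) (Y : Ω → ℕ) : Prop :=
  ∀ (j : Fin m → ℕ) (k : ℕ),
    volume {ω | J ω = j ∧ Y ω = k} =
      volume {ω | J ω = j} *
        ENNReal.ofReal (((FPol m L (extN m j)).coeff k : ℝ) / (FNorm m L (extN m j) : ℝ))

/-- `J` is supported on `L`-compatible vectors. -/

def compatSupport {Ω : Type*} [MeasureSpace Ω] (m : ℕ) (L : ℕ → ℕ)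
    (J : Ω → Fin m → ℕ) : Prop :=
  volume {ω | Compatible m L (extN m (J ω))} = 1

/-- The probability of the occupancy pattern `β` for the independent uniform
multinomial occupancy statistics of words of lengths `L_1, …, L_m`. -/

def multW (m : ℕ) (L : ℕ → ℕ) (β : ℕ → ℕ → ℕ) : ℝ :=
  ∏ k ∈ Finset.Icc 1 m,
    if ∑ i ∈ Finset.range (k + 1), β k i = L k then
      (Nat.multinomial (Finset.range (k + 1)) (β k) : ℝ) / ((k : ℝ) + 1) ^ L k
    else 0

/-- The event that the occupancy field `B` matches the pattern `β` on all relevant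
coordinates. -/

def occEvent (m : ℕ) {Ω : Type*} (B : Ω → ℕ → ℕ → ℕ) (β : ℕ → ℕ → ℕ) : Set Ω :=
  {ω | ∀ k ∈ Finset.Icc 1 m, ∀ i ∈ Finset.range (k + 1), B ω k i = β k i}

/-- `B` is an independent family of uniform multinomial occupancy statistics. -/

def multLaw {Ω : Type*} [MeasureSpace Ω] (m : ℕ) (L : ℕ → ℕ) (B : Ω → ℕ → ℕ → ℕ) : Prop :=
  ∀ β : ℕ → ℕ → ℕ, volume (occEvent m B β) = ENNReal.ofReal (multW m L β)

/-- The weighted sum `Σ_{k=1}^m Σ_{i=0}^k i·B_i(k)` of an occupancy pattern. -/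

def wSum (m : ℕ) (B : ℕ → ℕ → ℕ) : ℕ :=
  ∑ k ∈ Finset.Icc 1 m, ∑ i ∈ Finset.range (k + 1), i * B k i

/-- The asymptotic covariance matrix `Σ_{i,j}(k,ℓ)` of the conditioned occupancy
statistic. -/

def SigCond (m : ℕ) (a : Fin m → ℝ) :
    Matrix ((k : Fin m) × Fin ((k : ℕ) + 2)) ((k : Fin m) × Fin ((k : ℕ) + 2)) ℝ :=
  fun p q =>
    (if (p.1 : ℕ) = (q.1 : ℕ) then
        a p.1 * ((if (p.2 : ℕ) = (q.2 : ℕ) then 1 else 0) / ((p.1 : ℕ) + 2 : ℝ) -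
          1 / ((p.1 : ℕ) + 2 : ℝ) ^ 2)
      else 0) -
    a p.1 * a q.1 * ((((p.1 : ℕ) + 1 : ℝ)) - 2 * ((p.2 : ℕ) : ℝ)) *
        ((((q.1 : ℕ) + 1 : ℝ)) - 2 * ((q.2 : ℕ) : ℝ)) /
      (4 * ((p.1 : ℕ) + 2 : ℝ) * ((q.1 : ℕ) + 2 : ℝ) * sigSq m a)

/-!
Index the letters by the cells `(k, j)` with `1 ≤ j ≤ L_k`. By hypothesis the vector of letters is
uniformly distributed on the box `∏_{(k, j)} {0, …, k}`, so every quantity in the theorem is an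
average over that box. Mean and variance add up over the independent coordinates, and a uniform
letter on `{0, …, k}` has mean `k / 2` and variance `k (k + 2) / 12`.

The number of points of the box with coordinate sum `a` is the coefficient of `q ^ a` in
`∏_k (1 + q + ⋯ + q ^ k) ^ L_k`. Writing the top factor as `(1 + q (1 + ⋯ + q ^ (m - 1))) ^ L_m`
and expanding binomially, the term with `j_m` factors `q (1 + ⋯ + q ^ (m - 1))` contributes
`C(L_m, j_m) q ^ j_m` and raises the exponent of level `m - 1` to `L_{m-1} + j_m`; induction on
`m` yields `∑_j ∏_i C(L_i + j_{i+1}, j_i)`.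
-/

open Polynomial
open scoped BigOperators ENNReal

def geomPoly (k : ℕ) : ℕ[X] := ∑ v ∈ range (k + 1), X ^ v

lemma geomPoly_zero : geomPoly 0 = 1 := by simp [geomPoly]

lemma geomPoly_succ (k : ℕ) : geomPoly (k + 1) = X * geomPoly k + 1 := by
  rw [geomPoly, sum_range_succ', geomPoly, mul_sum]
  simp only [pow_succ', pow_zero]

lemma sum_antidiagonalTuple_succ {M : Type*} [AddCommMonoid M] (m a : ℕ)
    (f : (Fin (m + 1) → ℕ) → M) :
    ∑ j ∈ Nat.antidiagonalTuple (m + 1) a, f j =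
      ∑ t ∈ range (a + 1), ∑ j ∈ Nat.antidiagonalTuple m (a - t), f (Fin.snoc j t) := by
  rw [sum_sigma']
  refine sum_bij' (fun j _ => ⟨j (Fin.last m), Fin.init j⟩) (fun p _ => Fin.snoc p.2 p.1)
    ?_ ?_ ?_ ?_ ?_
  · intro j hj
    simp only [Nat.mem_antidiagonalTuple, Fin.sum_univ_castSucc] at hj
    simp only [mem_sigma, mem_range, Nat.mem_antidiagonalTuple, Fin.init]
    omega
  · rintro ⟨t, j⟩ hj
    simp only [mem_sigma, mem_range, Nat.mem_antidiagonalTuple] at hj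
    simp only [Nat.mem_antidiagonalTuple, Fin.sum_univ_castSucc, Fin.snoc_castSucc,
      Fin.snoc_last]
    omega
  all_goals intros; simp

lemma extN_snoc (m t : ℕ) (j : Fin m → ℕ) (i : ℕ) :
    extN (m + 1) (Fin.snoc j t) i = if i = m + 1 then t else extN m j i := by
  unfold extN
  split_ifs with h₁ h₂ h₃ h₃
  · subst h₂
    exact Fin.snoc_last (α := fun _ => ℕ) t j
  · exact Fin.snoc_castSucc (α := fun _ => ℕ) t j ⟨i - 1, by omega⟩
  all_goals omega

lemma nx_extN_snoc {m i : ℕ} (t : ℕ) (j : Fin m → ℕ) (hi : i ≤ m) :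
    nx (m + 1) (extN (m + 1) (Fin.snoc j t)) i = (Pi.single m t : ℕ → ℕ) i + nx m (extN m j) i := by
  simp only [nx, extN_snoc, Pi.single_apply]
  split_ifs <;> omega

lemma FNorm_snoc (m : ℕ) (L : ℕ → ℕ) (t : ℕ) (j : Fin m → ℕ) :
    FNorm (m + 1) L (extN (m + 1) (Fin.snoc j t)) =
      (L (m + 1)).choose t * FNorm m (L + Pi.single m t) (extN m j) := by
  rw [FNorm, prod_Icc_succ_top (by omega : 1 ≤ m + 1), mul_comm, FNorm]
  congr 1
  · simp [nx, extN_snoc]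
  · refine Finset.prod_congr rfl fun i hi => ?_
    rw [mem_Icc] at hi
    rw [nx_extN_snoc t j hi.2, extN_snoc, if_neg (by omega), Pi.add_apply, add_assoc]

lemma prod_geomPoly_pow_mul (m t : ℕ) (L : ℕ → ℕ) :
    (∏ k ∈ Icc 1 m, geomPoly k ^ L k) * geomPoly m ^ t =
      ∏ k ∈ Icc 1 m, geomPoly k ^ (L + Pi.single m t : ℕ → ℕ) k := by
  rcases Nat.eq_zero_or_pos m with rfl | hm
  · simp [geomPoly_zero]
  have hsingle : ∀ k, geomPoly k ^ (Pi.single m t : ℕ → ℕ) k =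
      if k = m then geomPoly m ^ t else 1 := by
    intro k
    by_cases hk : k = m <;> simp [hk]
  simp only [Pi.add_apply, pow_add, prod_mul_distrib, hsingle, prod_ite_eq', mem_Icc]
  rw [if_pos ⟨hm, le_rfl⟩]

lemma sum_range_eq_of_eq_zero_of_lt {M : Type*} [AddCommMonoid M] {f : ℕ → M} {a b : ℕ}
    (ha : ∀ t, a < t → f t = 0) (hb : ∀ t, b < t → f t = 0) :
    ∑ t ∈ range (a + 1), f t = ∑ t ∈ range (b + 1), f t := by
  have key : ∀ c ≤ a + b, (∀ t, c < t → f t = 0) →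
      ∑ t ∈ range (c + 1), f t = ∑ t ∈ range (a + b + 1), f t := fun c hc hf =>
    sum_subset (range_subset_range.2 (by omega)) fun t _ ht => hf t (by simpa using ht)
  rw [key a (by omega) ha, key b (by omega) hb]

lemma coeff_prod_geomPoly_pow (m : ℕ) (L : ℕ → ℕ) (a : ℕ) :
    (∏ k ∈ Icc 1 m, geomPoly k ^ L k).coeff a =
      ∑ j ∈ Nat.antidiagonalTuple m a, FNorm m L (extN m j) := by
  induction m generalizing L a with
  | zero => cases a <;> simp [FNorm, coeff_one]
  | succ m ih =>
    have hexpand : ∏ k ∈ Icc 1 (m + 1), geomPoly k ^ L k =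
        ∑ t ∈ range (L (m + 1) + 1), ((L (m + 1)).choose t : ℕ[X]) *
          ((∏ k ∈ Icc 1 m, geomPoly k ^ (L + Pi.single m t : ℕ → ℕ) k) * X ^ t) := by
      rw [prod_Icc_succ_top (by omega : 1 ≤ m + 1), geomPoly_succ, add_pow, mul_sum]
      refine Finset.sum_congr rfl fun t _ => ?_
      rw [← prod_geomPoly_pow_mul]
      ring
    rw [hexpand, finsetSum_coeff, sum_antidiagonalTuple_succ]
    simp only [coeff_natCast_mul, coeff_mul_X_pow', ih, FNorm_snoc, ← mul_sum]
    rw [sum_range_eq_of_eq_zero_of_lt (b := a)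
      (fun t ht => by rw [Nat.choose_eq_zero_of_lt ht, Nat.cast_zero, zero_mul])
      (fun t ht => by rw [if_neg (by omega), mul_zero])]
    refine Finset.sum_congr rfl fun t ht => ?_
    rw [if_pos (Nat.lt_succ_iff.1 (mem_range.1 ht)), Nat.cast_id]

section Expect

variable {ι κ 𝕜 : Type*} [Fintype ι] [DecidableEq ι] [Semifield 𝕜] [CharZero 𝕜]
  {t : ι → Finset κ}

lemma expect_piFinset_prod (F : ι → κ → 𝕜) :
    𝔼 g ∈ Fintype.piFinset t, ∏ i, F i (g i) = ∏ i, 𝔼 v ∈ t i, F i v := by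
  simp only [expect_eq_sum_div_card, ← prod_univ_sum, Fintype.card_piFinset, Nat.cast_prod,
    prod_div_distrib]

lemma expect_piFinset_apply (ht : ∀ i, (t i).Nonempty) (f : κ → 𝕜) (i : ι) :
    𝔼 g ∈ Fintype.piFinset t, f (g i) = 𝔼 v ∈ t i, f v := by
  have h := expect_piFinset_prod (t := t) fun j => if j = i then f else fun _ => 1
  rw [prod_eq_single i (fun j _ hj => by rw [if_neg hj, expect_const (ht j)]) (by simp),
    Finset.expect_congr rfl fun g _ => prod_eq_single i
      (fun j _ hj => by rw [if_neg hj]) (by simp)] at h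
  simpa using h

lemma expect_piFinset_mul_apply (ht : ∀ i, (t i).Nonempty) (f f' : κ → 𝕜) {i j : ι}
    (hij : i ≠ j) :
    𝔼 g ∈ Fintype.piFinset t, f (g i) * f' (g j) = (𝔼 v ∈ t i, f v) * 𝔼 v ∈ t j, f' v := by
  have h := expect_piFinset_prod (t := t) fun l =>
    if l = i then f else if l = j then f' else fun _ => 1
  have hother : ∀ l, l ≠ i ∧ l ≠ j →
      (if l = i then f else if l = j then f' else fun _ => 1) = fun _ => 1 := fun l hl => by
    rw [if_neg hl.1, if_neg hl.2]
  rw [prod_eq_mul i j hij (fun l _ hl => by rw [hother l hl, expect_const (ht l)]) (by simp)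
      (by simp),
    Finset.expect_congr rfl fun g _ => prod_eq_mul i j hij
      (fun l _ hl => by rw [hother l hl]) (by simp) (by simp)] at h
  simpa [hij.symm] using h

lemma expect_piFinset_sum_sq (ht : ∀ i, (t i).Nonempty)
    (c : ι → κ → 𝕜) (hc : ∀ i, 𝔼 v ∈ t i, c i v = 0) :
    𝔼 g ∈ Fintype.piFinset t, (∑ i, c i (g i)) ^ 2 = ∑ i, 𝔼 v ∈ t i, c i v ^ 2 := by
  simp_rw [sq, sum_mul_sum, expect_sum_comm]
  refine Finset.sum_congr rfl fun i _ => ?_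
  rw [sum_eq_single i (fun j _ hji => by
    rw [expect_piFinset_mul_apply ht _ _ hji.symm, hc, zero_mul]) (by simp)]
  exact expect_piFinset_apply ht (fun v => c i v * c i v) i

end Expect

section Box

variable {ι 𝕜 : Type*} [Fintype ι] [DecidableEq ι] [Field 𝕜] [CharZero 𝕜]

lemma sum_range_natCast (k : ℕ) : ∑ v ∈ range (k + 1), (v : 𝕜) = k * (k + 1) / 2 := by
  induction k with
  | zero => simp
  | succ k ih => rw [sum_range_succ, ih]; push_cast; ring

lemma sum_range_natCast_sq (k : ℕ) :
    ∑ v ∈ range (k + 1), (v : 𝕜) ^ 2 = k * (k + 1) * (2 * k + 1) / 6 := by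
  induction k with
  | zero => simp
  | succ k ih => rw [sum_range_succ, ih]; push_cast; ring

lemma expect_range_natCast (k : ℕ) : 𝔼 v ∈ range (k + 1), (v : 𝕜) = (k : 𝕜) / 2 := by
  rw [expect_eq_sum_div_card, sum_range_natCast, card_range]
  field_simp
  push_cast
  ring

lemma expect_range_natCast_sub_sq (k : ℕ) :
    𝔼 v ∈ range (k + 1), ((v : 𝕜) - k / 2) ^ 2 = (k : 𝕜) * (k + 2) / 12 := by
  simp only [expect_eq_sum_div_card, sub_sq, sum_add_distrib, sum_sub_distrib, ← sum_mul,
    ← mul_sum, sum_const, card_range, sum_range_natCast, sum_range_natCast_sq]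
  push_cast
  field_simp
  ring

def natBox (k : ι → ℕ) : Finset (ι → ℕ) := Fintype.piFinset fun i => range (k i + 1)

lemma card_natBox (k : ι → ℕ) : #(natBox k) = ∏ i, (k i + 1) := by simp [natBox]

lemma card_filter_natBox_sum_eq (k : ι → ℕ) (a : ℕ) :
    #{g ∈ natBox k | ∑ i, g i = a} = (∏ i, geomPoly (k i)).coeff a := by
  have h : ∏ i, geomPoly (k i) = ∑ g ∈ natBox k, X ^ ∑ i, g i := by
    simp only [geomPoly, prod_univ_sum, natBox, prod_pow_eq_pow_sum]
  rw [h, finsetSum_coeff, card_filter]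
  simp [coeff_X_pow, eq_comm]

lemma expect_natBox_sum (k : ι → ℕ) : 𝔼 g ∈ natBox k, ∑ i, (g i : 𝕜) = ∑ i, (k i : 𝕜) / 2 := by
  rw [natBox, expect_sum_comm]
  refine Finset.sum_congr rfl fun i _ => ?_
  rw [expect_piFinset_apply (fun _ => nonempty_range_add_one) (fun v => (v : 𝕜)) i,
    expect_range_natCast]

lemma expect_natBox_sum_sub_sq (k : ι → ℕ) :
    𝔼 g ∈ natBox k, (∑ i, (g i : 𝕜) - ∑ i, (k i : 𝕜) / 2) ^ 2 =
      ∑ i, (k i : 𝕜) * (k i + 2) / 12 := by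
  simp_rw [← sum_sub_distrib]
  rw [natBox, expect_piFinset_sum_sq (fun _ => nonempty_range_add_one)
    (fun i v => (v : 𝕜) - k i / 2)
    fun i => by rw [expect_sub_distrib, expect_range_natCast, expect_const nonempty_range_add_one,
      sub_self]]
  simp only [expect_range_natCast_sub_sq]

lemma prod_ite_le_eq_ite_mem_natBox (k g : ι → ℕ) :
    ∏ i, (if g i ≤ k i then ENNReal.ofReal (1 / ((k i : ℝ) + 1)) else 0) =
      if g ∈ natBox k then (#(natBox k) : ℝ≥0∞)⁻¹ else 0 := by
  have hmem : g ∈ natBox k ↔ ∀ i, g i ≤ k i := by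
    simp [natBox]
  split_ifs with hg
  · have hofReal : ∀ i, ENNReal.ofReal (1 / ((k i : ℝ) + 1)) = ((k i + 1 : ℕ) : ℝ≥0∞)⁻¹ := by
      intro i
      rw [one_div, ENNReal.ofReal_inv_of_pos (by positivity), ← ENNReal.ofReal_natCast]
      push_cast
      rfl
    simp only [hmem.1 hg, if_true, hofReal, card_natBox, Nat.cast_prod]
    exact (ENNReal.prod_inv_distrib fun _ _ _ _ _ => Or.inr (ENNReal.natCast_ne_top _)).symm
  · obtain ⟨i, hi⟩ := not_forall.1 (mt hmem.2 hg)
    exact prod_eq_zero (mem_univ i) (if_neg hi)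

end Box

section Uniform

variable {Ω α : Type*} [MeasurableSpace Ω] {μ : Measure Ω} [IsFiniteMeasure μ]
  [MeasurableSpace α] [MeasurableSingletonClass α] [Countable α] [DecidableEq α]
  {V : Ω → α} {B : Finset α}

lemma integral_comp_eq_expect_of_uniform (hV : Measurable V)
    (hVB : ∀ g, μ (V ⁻¹' {g}) = if g ∈ B then (#B : ℝ≥0∞)⁻¹ else 0) (φ : α → ℝ) :
    ∫ ω, φ (V ω) ∂μ = 𝔼 g ∈ B, φ g := by
  have hmap : ∀ g, μ.map V {g} = if g ∈ B then (#B : ℝ≥0∞)⁻¹ else 0 := fun g => by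
    rw [Measure.map_apply hV (measurableSet_singleton g), hVB]
  have hae : ∀ᵐ g ∂μ.map V, g ∈ (B : Set α) := ae_iff_of_countable.2 fun g hg => by
    by_contra h
    exact hg (by rw [hmap, if_neg (by simpa using h)])
  rw [← integral_map hV.aemeasurable (measurable_of_countable φ).aestronglyMeasurable,
    ← Measure.restrict_eq_self_of_ae_mem hae,
    setIntegral_finset B (IntegrableOn.of_finite B.finite_toSet), expect_eq_sum_div_card,
    sum_div]
  refine Finset.sum_congr rfl fun g hg => ?_
  rw [measureReal_def, hmap, if_pos hg, smul_eq_mul, ENNReal.toReal_inv, ENNReal.toReal_natCast,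
    inv_mul_eq_div]

lemma measureReal_eq_card_filter_div_of_uniform (hV : Measurable V)
    (hVB : ∀ g, μ (V ⁻¹' {g}) = if g ∈ B then (#B : ℝ≥0∞)⁻¹ else 0) (p : α → Prop)
    [DecidablePred p] : μ.real {ω | p (V ω)} = #{g ∈ B | p g} / #B := by
  change μ.real (V ⁻¹' {g | p g}) = _
  rw [← integral_indicator_one (hV (Set.to_countable {g | p g}).measurableSet)]
  have hind : (V ⁻¹' {g | p g}).indicator 1 = fun ω => if p (V ω) then (1 : ℝ) else 0 := by
    funext ω
    by_cases h : p (V ω) <;> simp [h]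
  rw [hind, integral_comp_eq_expect_of_uniform hV hVB fun g => if p g then (1 : ℝ) else 0,
    expect_eq_sum_div_card, sum_boole]

end Uniform

def cells (m : ℕ) (L : ℕ → ℕ) : Finset (Σ _ : ℕ, ℕ) := (Icc 1 m).sigma fun k => Icc 1 (L k)

@[to_additive]
lemma prod_coe_cells {M : Type*} [CommMonoid M] (m : ℕ) (L : ℕ → ℕ) (f : ℕ → ℕ → M) :
    ∏ p : cells m L, f p.1.1 p.1.2 = ∏ k ∈ Icc 1 m, ∏ j ∈ Icc 1 (L k), f k j := by
  rw [prod_coe_sort (cells m L) fun p => f p.1 p.2, cells, prod_sigma]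

@[to_additive]
lemma prod_coe_cells_fst {M : Type*} [CommMonoid M] (m : ℕ) (L : ℕ → ℕ) (f : ℕ → M) :
    ∏ p : cells m L, f p.1.1 = ∏ k ∈ Icc 1 m, f k ^ L k :=
  (prod_coe_cells m L fun k _ => f k).trans (by simp)

def letters {Ω : Type*} (X : Ω → ℕ → ℕ → ℕ) (m : ℕ) (L : ℕ → ℕ) (ω : Ω) (p : cells m L) : ℕ :=
  X ω p.1.1 p.1.2

lemma sum_letters {Ω : Type*} (X : Ω → ℕ → ℕ → ℕ) (m : ℕ) (L : ℕ → ℕ) (ω : Ω) :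
    ∑ p, letters X m L ω p = ∑ k ∈ Icc 1 m, ∑ jj ∈ Icc 1 (L k), X ω k jj :=
  sum_coe_cells m L (X ω)

section Letters

variable {Ω : Type*} [MeasureSpace Ω] {m : ℕ} {L : ℕ → ℕ} {X : Ω → ℕ → ℕ → ℕ}

lemma measurable_letters (hXm : Measurable X) : Measurable (letters X m L) :=
  measurable_pi_lambda _ fun p =>
    (measurable_pi_apply p.1.2).comp ((measurable_pi_apply p.1.1).comp hXm)

lemma volume_preimage_letters
    (hX : ∀ x : ℕ → ℕ → ℕ,
      volume {ω | ∀ k ∈ Finset.Icc 1 m, ∀ jj ∈ Finset.Icc 1 (L k), X ω k jj = x k jj} =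
        ∏ k ∈ Finset.Icc 1 m, ∏ jj ∈ Finset.Icc 1 (L k),
          (if x k jj ≤ k then ENNReal.ofReal (1 / ((k : ℝ) + 1)) else 0))
    (g : cells m L → ℕ) :
    volume (letters X m L ⁻¹' {g}) =
      if g ∈ natBox (fun p : cells m L => p.1.1) then
        (#(natBox fun p : cells m L => p.1.1) : ℝ≥0∞)⁻¹ else 0 := by
  classical
  let x : ℕ → ℕ → ℕ := fun k j => if h : ⟨k, j⟩ ∈ cells m L then g ⟨_, h⟩ else 0
  have hx : ∀ p : cells m L, x p.1.1 p.1.2 = g p := fun p => dif_pos p.2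
  have hset : letters X m L ⁻¹' {g} =
      {ω | ∀ k ∈ Icc 1 m, ∀ jj ∈ Icc 1 (L k), X ω k jj = x k jj} := by
    ext ω
    simp only [Set.mem_preimage, Set.mem_singleton_iff, funext_iff, Set.mem_ofPred_eq]
    constructor
    · intro h k hk jj hjj
      have hp : ⟨k, jj⟩ ∈ cells m L := mem_sigma.2 ⟨hk, hjj⟩
      exact (h ⟨_, hp⟩).trans (hx ⟨_, hp⟩).symm
    · intro h p
      have hp := mem_sigma.1 p.2
      exact (h _ hp.1 _ hp.2).trans (hx p)
  rw [hset, hX, ← prod_coe_cells m L fun k j =>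
      if x k j ≤ k then ENNReal.ofReal (1 / ((k : ℝ) + 1)) else 0]
  simp only [hx]
  exact prod_ite_le_eq_ite_mem_natBox _ g

end Letters

theorem statement_4_general
    {Ω : Type*} [MeasureSpace Ω] [IsProbabilityMeasure (volume : Measure Ω)]
    (m : ℕ) (L : ℕ → ℕ)
    (X : Ω → ℕ → ℕ → ℕ) (hXm : Measurable X)
    (hX : ∀ x : ℕ → ℕ → ℕ,
      volume {ω | ∀ k ∈ Finset.Icc 1 m, ∀ jj ∈ Finset.Icc 1 (L k), X ω k jj = x k jj} =
        ∏ k ∈ Finset.Icc 1 m, ∏ jj ∈ Finset.Icc 1 (L k),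
          (if x k jj ≤ k then ENNReal.ofReal (1 / ((k : ℝ) + 1)) else 0))
    (S : Ω → ℕ)
    (hS : S = fun ω => ∑ k ∈ Finset.Icc 1 m, ∑ jj ∈ Finset.Icc 1 (L k), X ω k jj) :
    (∀ a : ℕ, volume {ω | S ω = a} =
      ENNReal.ofReal
        ((∑ j ∈ Finset.Nat.antidiagonalTuple m a, (FNorm m L (extN m j) : ℝ)) /
          ∏ i ∈ Finset.Icc 1 m, ((i : ℝ) + 1) ^ L i)) ∧
    ((∫ ω, (S ω : ℝ)) = (1 / 2) * ∑ i ∈ Finset.Icc 1 m, (i : ℝ) * (L i : ℝ)) ∧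
    (covar (fun ω => (S ω : ℝ)) (fun ω => (S ω : ℝ)) =
      (1 / 12) * ∑ i ∈ Finset.Icc 1 m, (i : ℝ) * ((i : ℝ) + 2) * (L i : ℝ)) := by
  have hV := measurable_letters (m := m) (L := L) hXm
  have hunif := volume_preimage_letters hX
  have hS' : S = fun ω => ∑ p, letters X m L ω p := by simp only [hS, sum_letters]
  have hlaw : ∀ φ : ℕ → ℝ, ∫ ω, φ (S ω) = 𝔼 g ∈ natBox fun p : cells m L => p.1.1, φ (∑ p, g p) :=
    fun φ => by rw [hS']; exact integral_comp_eq_expect_of_uniform hV hunif fun g => φ (∑ p, g p)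
  have hmean : ∫ ω, (S ω : ℝ) = ∑ p : cells m L, (p.1.1 : ℝ) / 2 := by
    rw [hlaw, ← expect_natBox_sum]
    push_cast
    rfl
  refine ⟨fun a => ?_, ?_, ?_⟩
  · rw [← ofReal_measureReal, hS',
      measureReal_eq_card_filter_div_of_uniform hV hunif fun g => ∑ p, g p = a,
      card_filter_natBox_sum_eq, card_natBox, prod_coe_cells_fst, coeff_prod_geomPoly_pow]
    push_cast
    rw [prod_coe_cells_fst m L fun k => (k : ℝ) + 1]
  · rw [hmean, sum_coe_cells_fst m L fun k => (k : ℝ) / 2, mul_sum]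
    simp only [nsmul_eq_mul]
    exact Finset.sum_congr rfl fun i _ => by ring
  · simp only [covar, hmean, ← sq]
    rw [hlaw fun n => ((n : ℝ) - ∑ p : cells m L, (p.1.1 : ℝ) / 2) ^ 2]
    push_cast
    rw [expect_natBox_sum_sub_sq, sum_coe_cells_fst m L fun k => (k : ℝ) * (k + 2) / 12, mul_sum]
    simp only [nsmul_eq_mul]
    exact Finset.sum_congr rfl fun i _ => by ring

/-- For the total sum `S_L` of independent uniform letters, the supernomial
probabilities, the mean `(1/2) Σ i L_i`, and the variance `(1/12) Σ i(i+2) L_i`. -/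
theorem statement_4
    {Ω : Type*} [MeasureSpace Ω] [IsProbabilityMeasure (volume : Measure Ω)]
    (m : ℕ) (hm : 1 ≤ m) (L : ℕ → ℕ) (hL : ∀ i ∈ Finset.Icc 1 m, 0 < L i)
    (X : Ω → ℕ → ℕ → ℕ) (hXm : Measurable X)
    (hX : ∀ x : ℕ → ℕ → ℕ,
      volume {ω | ∀ k ∈ Finset.Icc 1 m, ∀ jj ∈ Finset.Icc 1 (L k), X ω k jj = x k jj} =
        ∏ k ∈ Finset.Icc 1 m, ∏ jj ∈ Finset.Icc 1 (L k),
          (if x k jj ≤ k then ENNReal.ofReal (1 / ((k : ℝ) + 1)) else 0))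
    (S : Ω → ℕ)
    (hS : S = fun ω => ∑ k ∈ Finset.Icc 1 m, ∑ jj ∈ Finset.Icc 1 (L k), X ω k jj) :
    (∀ a : ℕ, volume {ω | S ω = a} =
      ENNReal.ofReal
        ((∑ j ∈ Finset.Nat.antidiagonalTuple m a, (FNorm m L (extN m j) : ℝ)) /
          ∏ i ∈ Finset.Icc 1 m, ((i : ℝ) + 1) ^ L i)) ∧
    ((∫ ω, (S ω : ℝ)) = (1 / 2) * ∑ i ∈ Finset.Icc 1 m, (i : ℝ) * (L i : ℝ)) ∧
    (covar (fun ω => (S ω : ℝ)) (fun ω => (S ω : ℝ)) =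
      (1 / 12) * ∑ i ∈ Finset.Icc 1 m, (i : ℝ) * ((i : ℝ) + 2) * (L i : ℝ)) :=
  statement_4_general m L X hXm hX S hS
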